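/- Suppose the discounted aggregate Katz-Bonacich objective v(s) = Σ_{t=1}^T D(t)·1'(I − φG(t))^{-1}1 is maximized over the convex set S_w of feasible weighted formation paths, where D(t) ≥ 0 and 0 ≤ φ < 1/λ_max(G) for all feasible G. Then v is a convex function on S_w, and hence its maximum over S_w is attained at an extreme point of S_w. -/

import Mathlib

open Matrix BigOperators

/-- The network preceding period `k` along the path `s` (the empty network if `k = 0`). -/
def prevNet {T n : ℕ} (s : Fin T → Matrix (Fin n) (Fin n) ℝ) (k : Fin T) :
    Matrix (Fin n) (Fin n) ℝ :=
  if k.val = 0 then 0 else s ⟨k.val - 1, lt_of_le_of_lt (Nat.sub_le _ _) k.isLt⟩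

/-- The set of feasible weighted network formation paths: starting from the empty
network, each period's network is symmetric with zero diagonal and entries in `[0,1]`,
dominates the previous one entrywise, and adds total weight `1'W1 = 2`. -/
def SW (T n : ℕ) : Set (Fin T → Matrix (Fin n) (Fin n) ℝ) :=
  {s | ∀ k : Fin T,
    (s k).IsSymm ∧ (∀ u, s k u u = 0) ∧ (∀ u v, 0 ≤ s k u v ∧ s k u v ≤ 1) ∧
    (∀ u v, prevNet s k u v ≤ s k u v) ∧
    (∑ u, ∑ v, (s k u v - prevNet s k u v)) = 2}

/-!
For positive definite `A`, `x ⬝ᵥ A⁻¹ x = max_y (2 x ⬝ᵥ y - y ⬝ᵥ A y)`, the maximum being attained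
at `y = A⁻¹ x`; as a supremum of functions affine in `A` it is convex in `A`. Composing with the
affine maps `s ↦ I - φ s(k)` and summing with the weights `D k ≥ 0` makes the objective convex on
`S_w`. Since `S_w` is compact and the objective continuous, its maximizers form a nonempty compact
extreme subset of `S_w`; by Krein–Milman this subset has an extreme point, which is then an
extreme point of `S_w`.
-/

open Set

section Convexity

variable {𝕜 E β : Type*}

lemma convexOn_finsetSum [Semiring 𝕜] [PartialOrder 𝕜] [AddCommMonoid E] [AddCommMonoid β]
    [PartialOrder β] [IsOrderedAddMonoid β] [SMul 𝕜 E] [Module 𝕜 β] {s : Set E}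
    {ι : Type*} (t : Finset ι) {g : ι → E → β} (hs : Convex 𝕜 s)
    (hg : ∀ i ∈ t, ConvexOn 𝕜 s (g i)) : ConvexOn 𝕜 s fun x => ∑ i ∈ t, g i x := by
  classical
  induction t using Finset.induction_on with
  | empty => simpa using convexOn_const (0 : β) hs
  | insert i t hi ih =>
    simp only [Finset.sum_insert hi]
    exact (hg i (Finset.mem_insert_self i t)).add
      (ih fun j hj => hg j (Finset.mem_insert_of_mem hj))

lemma ConvexOn.isExtreme_inter_preimage_Ici [Field 𝕜] [LinearOrder 𝕜] [IsStrictOrderedRing 𝕜]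
    [AddCommGroup E] [Module 𝕜 E] {s : Set E} {f : E → 𝕜} (hf : ConvexOn 𝕜 s f) {c : 𝕜}
    (hc : ∀ x ∈ s, f x ≤ c) : IsExtreme 𝕜 s (s ∩ f ⁻¹' Ici c) := by
  refine ⟨inter_subset_left, fun x₁ hx₁ x₂ hx₂ x hx hseg => ?_⟩
  obtain ⟨a, b, ha, hb, hab, rfl⟩ := hseg
  have hle : f (a • x₁ + b • x₂) ≤ a * f x₁ + b * f x₂ := hf.2 hx₁ hx₂ ha.le hb.le hab
  have hcx : c ≤ f (a • x₁ + b • x₂) := hx.2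
  refine ⟨hx₁, show c ≤ f x₁ from not_lt.mp fun h => ?_⟩
  have hc' : a * c + b * c = c := by rw [← add_mul, hab, one_mul]
  linarith [mul_lt_mul_of_pos_left h ha, mul_le_mul_of_nonneg_left (hc x₂ hx₂) hb.le]

theorem ConvexOn.exists_isMaxOn_mem_extremePoints [AddCommGroup E] [Module ℝ E]
    [TopologicalSpace E] [T2Space E] [IsTopologicalAddGroup E] [ContinuousSMul ℝ E]
    [LocallyConvexSpace ℝ E] {s : Set E} {f : E → ℝ} (hf : ConvexOn ℝ s f)
    (hfc : ContinuousOn f s) (hs : IsCompact s) (hne : s.Nonempty) :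
    ∃ x ∈ s.extremePoints ℝ, IsMaxOn f s x := by
  obtain ⟨x₀, hx₀, hmax⟩ := hs.exists_isMaxOn hne hfc
  have hM : IsExtreme ℝ s (s ∩ f ⁻¹' Ici (f x₀)) := hf.isExtreme_inter_preimage_Ici hmax
  have hMc : IsCompact (s ∩ f ⁻¹' Ici (f x₀)) :=
    hs.of_isClosed_subset (hfc.preimage_isClosed_of_isClosed hs.isClosed isClosed_Ici)
      inter_subset_left
  obtain ⟨x, hx⟩ := hMc.extremePoints_nonempty ⟨x₀, hx₀, show f x₀ ≤ f x₀ from le_rfl⟩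
  exact ⟨x, hM.extremePoints_subset_extremePoints hx,
    isMaxOn_iff.mpr fun y hy => (hmax hy).trans hx.1.2⟩

end Convexity

namespace Matrix

instance locallyConvexSpace {𝕜 m n R : Type*} [Semiring 𝕜] [PartialOrder 𝕜] [AddCommMonoid R]
    [TopologicalSpace R] [Module 𝕜 R] [LocallyConvexSpace 𝕜 R] :
    LocallyConvexSpace 𝕜 (Matrix m n R) :=
  Pi.locallyConvexSpace

variable {ι : Type*} [Fintype ι]

lemma continuousAt_inv_of_det_ne_zero [DecidableEq ι] {R : Type*} [Field R] [TopologicalSpace R]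
    [IsTopologicalRing R] [ContinuousInv₀ R] {A : Matrix ι ι R} (h : A.det ≠ 0) :
    ContinuousAt Inv.inv A :=
  continuousAt_matrix_inv A (by rw [Ring.inverse_eq_inv']; exact continuousAt_inv₀ h)

lemma sum_sum_eq_one_dotProduct_mulVec_one (B : Matrix ι ι ℝ) :
    ∑ u, ∑ v, B u v = 1 ⬝ᵥ (B *ᵥ 1) := by
  simp [dotProduct, mulVec]

lemma PosDef.dotProduct_mulVec_comm {A : Matrix ι ι ℝ} (hA : A.PosDef) (x y : ι → ℝ) :
    x ⬝ᵥ (A *ᵥ y) = y ⬝ᵥ (A *ᵥ x) := by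
  rw [dotProduct_mulVec, ← mulVec_transpose, (isHermitian_iff_isSymm.mp hA.1).eq, dotProduct_comm]

omit [Fintype ι] in
lemma convex_setOf_posDef : Convex ℝ {A : Matrix ι ι ℝ | A.PosDef} := by
  intro A hA B hB a b ha hb hab
  rcases ha.eq_or_lt with rfl | ha
  · simpa [show b = 1 by linarith] using hB
  · exact (hA.smul ha).add_posSemidef (hB.posSemidef.smul hb)

variable [DecidableEq ι]

lemma PosDef.mulVec_inv_mulVec {A : Matrix ι ι ℝ} (hA : A.PosDef) (x : ι → ℝ) :
    A *ᵥ (A⁻¹ *ᵥ x) = x := by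
  rw [mulVec_mulVec, mul_nonsing_inv _ hA.det_pos.ne'.isUnit, one_mulVec]

lemma PosDef.two_mul_dotProduct_sub_le {A : Matrix ι ι ℝ} (hA : A.PosDef) (x y : ι → ℝ) :
    2 * (x ⬝ᵥ y) - y ⬝ᵥ (A *ᵥ y) ≤ x ⬝ᵥ (A⁻¹ *ᵥ x) := by
  have hAw : A *ᵥ (A⁻¹ *ᵥ x) = x := hA.mulVec_inv_mulVec x
  have hxy : (A⁻¹ *ᵥ x) ⬝ᵥ (A *ᵥ y) = x ⬝ᵥ y := by
    rw [hA.dotProduct_mulVec_comm, hAw, dotProduct_comm]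
  have hnonneg := hA.posSemidef.dotProduct_mulVec_nonneg (y - A⁻¹ *ᵥ x)
  simp only [star_trivial, mulVec_sub, hAw, sub_dotProduct, dotProduct_sub, hxy] at hnonneg
  rw [dotProduct_comm y x, dotProduct_comm (A⁻¹ *ᵥ x) x] at hnonneg
  linarith

theorem convexOn_dotProduct_inv_mulVec (x : ι → ℝ) :
    ConvexOn ℝ {A : Matrix ι ι ℝ | A.PosDef} fun A => x ⬝ᵥ (A⁻¹ *ᵥ x) := by
  refine ⟨convex_setOf_posDef, fun A hA B hB a b ha hb hab => ?_⟩
  have hC : (a • A + b • B).PosDef := convex_setOf_posDef hA hB ha hb hab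
  set y := (a • A + b • B)⁻¹ *ᵥ x
  have hq : x ⬝ᵥ y = a * (2 * (x ⬝ᵥ y) - y ⬝ᵥ (A *ᵥ y)) +
      b * (2 * (x ⬝ᵥ y) - y ⬝ᵥ (B *ᵥ y)) := by
    have hCy : y ⬝ᵥ ((a • A + b • B) *ᵥ y) = y ⬝ᵥ x :=
      congrArg (y ⬝ᵥ ·) (hC.mulVec_inv_mulVec x)
    simp only [add_mulVec, smul_mulVec, dotProduct_add, dotProduct_smul, smul_eq_mul,
      dotProduct_comm y x] at hCy
    linear_combination hCy - 2 * (x ⬝ᵥ y) * hab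
  simp only [smul_eq_mul]
  rw [hq]
  gcongr
  · exact hA.two_mul_dotProduct_sub_le x y
  · exact hB.two_mul_dotProduct_sub_le x y

end Matrix

section KatzBonacich

variable {κ ι : Type*} [Fintype κ] [Fintype ι] [DecidableEq ι]

noncomputable def katzBonacichValue (D : κ → ℝ) (φ : ℝ) (s : κ → Matrix ι ι ℝ) : ℝ :=
  ∑ k, D k * ∑ u, ∑ v, ((1 - φ • s k)⁻¹) u v

def katzBonacichAffineMap (φ : ℝ) (k : κ) : (κ → Matrix ι ι ℝ) →ᵃ[ℝ] Matrix ι ι ℝ :=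
  AffineMap.const ℝ _ 1 - φ • (LinearMap.proj k).toAffineMap

lemma convexOn_katzBonacichValue {D : κ → ℝ} (hD : ∀ k, 0 ≤ D k) (φ : ℝ)
    {S : Set (κ → Matrix ι ι ℝ)} (hS : Convex ℝ S) (hpd : ∀ s ∈ S, ∀ k, (1 - φ • s k).PosDef) :
    ConvexOn ℝ S (katzBonacichValue D φ) := by
  refine convexOn_finsetSum _ hS fun k _ => ?_
  have hk := (((convexOn_dotProduct_inv_mulVec 1).comp_affineMap
    (katzBonacichAffineMap φ k)).subset (fun s hs => hpd s hs k) hS).smul (hD k)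
  simp only [smul_eq_mul, ← sum_sum_eq_one_dotProduct_mulVec_one, Function.comp_def] at hk
  exact hk

lemma continuousOn_katzBonacichValue (D : κ → ℝ) (φ : ℝ) {S : Set (κ → Matrix ι ι ℝ)}
    (hpd : ∀ s ∈ S, ∀ k, (1 - φ • s k).PosDef) : ContinuousOn (katzBonacichValue D φ) S := by
  intro s hs
  have hinv : ContinuousAt (fun s : κ → Matrix ι ι ℝ => fun k => (1 - φ • s k)⁻¹) s := by
    refine continuousAt_pi.mpr fun k =>
      ContinuousAt.comp (f := fun s : κ → Matrix ι ι ℝ => 1 - φ • s k)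
        (continuousAt_inv_of_det_ne_zero (hpd s hs k).det_pos.ne') ?_
    exact (continuous_const.sub ((continuous_apply k).const_smul φ)).continuousAt
  have hsum : Continuous fun m : κ → Matrix ι ι ℝ => ∑ k, D k * ∑ u, ∑ v, m k u v := by
    fun_prop
  exact (hsum.continuousAt.comp hinv).continuousWithinAt

end KatzBonacich

section FormationPaths

variable {T n : ℕ}

lemma prevNet_smul_add_smul (s₁ s₂ : Fin T → Matrix (Fin n) (Fin n) ℝ) (a b : ℝ) (k : Fin T) :
    prevNet (a • s₁ + b • s₂) k = a • prevNet s₁ k + b • prevNet s₂ k := by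
  unfold prevNet
  split_ifs <;> simp

lemma convex_SW : Convex ℝ (SW T n) := by
  intro s₁ h₁ s₂ h₂ a b ha hb hab k
  obtain ⟨hsymm₁, hdiag₁, hbd₁, hmono₁, hsum₁⟩ := h₁ k
  obtain ⟨hsymm₂, hdiag₂, hbd₂, hmono₂, hsum₂⟩ := h₂ k
  have hentry : ∀ u v, (a • s₁ + b • s₂) k u v = a * s₁ k u v + b * s₂ k u v := fun _ _ => rfl
  have hprev : ∀ u v, prevNet (a • s₁ + b • s₂) k u v = a * prevNet s₁ k u v + b * prevNet s₂ k u v :=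
    fun u v => by rw [prevNet_smul_add_smul]; rfl
  refine ⟨(hsymm₁.smul a).add (hsymm₂.smul b), fun u => ?_, fun u v => ?_, fun u v => ?_, ?_⟩
  · simp [hentry, hdiag₁, hdiag₂]
  · obtain ⟨h₁l, h₁u⟩ := hbd₁ u v
    obtain ⟨h₂l, h₂u⟩ := hbd₂ u v
    rw [hentry]
    constructor <;> nlinarith
  · rw [hentry, hprev]
    nlinarith [hmono₁ u v, hmono₂ u v]
  · calc ∑ u, ∑ v, ((a • s₁ + b • s₂) k u v - prevNet (a • s₁ + b • s₂) k u v)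
        = a * ∑ u, ∑ v, (s₁ k u v - prevNet s₁ k u v)
          + b * ∑ u, ∑ v, (s₂ k u v - prevNet s₂ k u v) := by
          simp only [Finset.mul_sum, ← Finset.sum_add_distrib, hentry, hprev]
          congr! 2; ring
      _ = 2 := by rw [hsum₁, hsum₂]; linear_combination 2 * hab

lemma isClosed_SW : IsClosed (SW T n) := by
  have hs : ∀ k, Continuous fun s : Fin T → Matrix (Fin n) (Fin n) ℝ => s k := continuous_apply
  have hp : ∀ k, Continuous fun s : Fin T → Matrix (Fin n) (Fin n) ℝ => prevNet s k := by
    intro k; unfold prevNet; split_ifs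
    · exact continuous_const
    · exact continuous_apply _
  simp only [SW, ofPred_forall, ofPred_and]
  refine isClosed_iInter fun k => (isClosed_eq (hs k).matrix_transpose (hs k)).inter <|
    (isClosed_iInter fun u => isClosed_eq ((hs k).matrix_elem u u) continuous_const).inter <|
    (isClosed_iInter fun u => isClosed_iInter fun v =>
      (isClosed_le continuous_const ((hs k).matrix_elem u v)).inter
        (isClosed_le ((hs k).matrix_elem u v) continuous_const)).inter <|
    (isClosed_iInter fun u => isClosed_iInter fun v =>
      isClosed_le ((hp k).matrix_elem u v) ((hs k).matrix_elem u v)).inter <|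
    isClosed_eq (continuous_finsetSum _ fun u _ => continuous_finsetSum _ fun v _ =>
      ((hs k).matrix_elem u v).sub ((hp k).matrix_elem u v)) continuous_const

lemma isCompact_SW : IsCompact (SW T n) :=
  (isCompact_univ_pi fun _ => isCompact_univ_pi fun _ => isCompact_univ_pi fun _ =>
    isCompact_Icc).of_isClosed_subset isClosed_SW fun _ hs k _ u _ v _ => (hs k).2.2.1 u v

end FormationPaths

theorem stmt16_general {T n : ℕ} (D : Fin T → ℝ) (hD : ∀ t, 0 ≤ D t)
    (φ : ℝ)
    (hpd : ∀ s ∈ SW T n, ∀ k : Fin T,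
      ((1 : Matrix (Fin n) (Fin n) ℝ) - φ • s k).PosDef)
    (hne : (SW T n).Nonempty) :
    ConvexOn ℝ (SW T n)
      (fun s => ∑ k, D k * ∑ u, ∑ v,
        (((1 : Matrix (Fin n) (Fin n) ℝ) - φ • s k)⁻¹) u v) ∧
    ∃ s ∈ Set.extremePoints ℝ (SW T n), ∀ s' ∈ SW T n,
      (∑ k, D k * ∑ u, ∑ v,
          (((1 : Matrix (Fin n) (Fin n) ℝ) - φ • s' k)⁻¹) u v) ≤
        ∑ k, D k * ∑ u, ∑ v,
          (((1 : Matrix (Fin n) (Fin n) ℝ) - φ • s k)⁻¹) u v := by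
  have hconv : ConvexOn ℝ (SW T n) (katzBonacichValue D φ) :=
    convexOn_katzBonacichValue hD φ convex_SW hpd
  obtain ⟨s, hs, hmax⟩ := hconv.exists_isMaxOn_mem_extremePoints
    (continuousOn_katzBonacichValue D φ hpd) isCompact_SW hne
  exact ⟨hconv, s, hs, fun s' hs' => hmax hs'⟩

/-- The discounted aggregate Katz-Bonacich objective
`v(s) = Σ_t D(t)·1'(I - φ G(t))⁻¹1` is convex on `S_w`, and hence attains its
maximum over `S_w` at an extreme point of `S_w`. -/
theorem stmt16 {T n : ℕ} (D : Fin T → ℝ) (hD : ∀ t, 0 ≤ D t)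
    (φ : ℝ) (hφ : 0 ≤ φ)
    (hpd : ∀ s ∈ SW T n, ∀ k : Fin T,
      ((1 : Matrix (Fin n) (Fin n) ℝ) - φ • s k).PosDef)
    (hne : (SW T n).Nonempty) :
    ConvexOn ℝ (SW T n)
      (fun s => ∑ k, D k * ∑ u, ∑ v,
        (((1 : Matrix (Fin n) (Fin n) ℝ) - φ • s k)⁻¹) u v) ∧
    ∃ s ∈ Set.extremePoints ℝ (SW T n), ∀ s' ∈ SW T n,
      (∑ k, D k * ∑ u, ∑ v,
          (((1 : Matrix (Fin n) (Fin n) ℝ) - φ • s' k)⁻¹) u v) ≤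
        ∑ k, D k * ∑ u, ∑ v,
          (((1 : Matrix (Fin n) (Fin n) ℝ) - φ • s k)⁻¹) u v :=
  stmt16_general D hD φ hpd hne
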